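/- arXiv:2403.07411 — 3 statements merged into one kernel-verified Lean document; each statement's English description precedes it below -/
import Mathlib

section
/- (Kolountzakis) Let d ≥ 1, let A ∈ ℝ^{d×d} be nonsingular, and suppose there exists Φ ⊆ Aℤ^d such that ([0,1)^d, Φ) is a tiling of ℝ^d. Then |det A| = 1/N for some natural number N ≥ 1. -/
open MeasureTheory
open scoped ENNReal

noncomputable section

/-- The half-open unit cube `[0,1)^d` in `ℝ^d`. -/
def cube (d : ℕ) : Set (Fin d → ℝ) := {x | ∀ i, 0 ≤ x i ∧ x i < 1}

/-- `(S, Φ)` is a tiling of `ℝ^d`: every point lies in exactly one translate `S + φ`, `φ ∈ Φ`. -/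
def IsTiling {d : ℕ} (S Φ : Set (Fin d → ℝ)) : Prop :=
  ∀ x : Fin d → ℝ, ∃! φ, φ ∈ Φ ∧ x - φ ∈ S

/-- The lattice `C ℤ^d` generated by the columns of the matrix `C`. -/
def latticeOf {d : ℕ} (C : Matrix (Fin d) (Fin d) ℝ) : Set (Fin d → ℝ) :=
  {v | ∃ k : Fin d → ℤ, v = C.mulVec fun i => (k i : ℝ)}

/-- A 0–1 matrix with exactly one `1` in each row and column. -/
def IsPermMatrix {d : ℕ} (P : Matrix (Fin d) (Fin d) ℝ) : Prop :=
  ∃ σ : Equiv.Perm (Fin d), ∀ i j, P i j = if σ j = i then 1 else 0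

def IsLowerUnitriangular {d : ℕ} (G : Matrix (Fin d) (Fin d) ℝ) : Prop :=
  (∀ i, G i i = 1) ∧ ∀ i j : Fin d, i < j → G i j = 0

def IsUpperUnitriangular {d : ℕ} (G : Matrix (Fin d) (Fin d) ℝ) : Prop :=
  (∀ i, G i i = 1) ∧ ∀ i j : Fin d, j < i → G i j = 0

/-- Unitriangular: (lower or upper) triangular with all diagonal entries `1`. -/
def IsUnitriangular {d : ℕ} (G : Matrix (Fin d) (Fin d) ℝ) : Prop :=
  IsLowerUnitriangular G ∨ IsUpperUnitriangular G

/-! The lattice `L = A ℤ^d` acts on `ℝ^d` by translations, with fundamental domain `A [0,1)^d` of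
volume `|det A|`. Because the cube tiles `ℝ^d` by translates taken from `L`, every `L`-orbit meets
the cube in the same number `N` of points, and integrating this count over the fundamental domain
gives `1 = vol [0,1)^d = N · |det A|`. -/

open Set

theorem cube_eq_pi (d : ℕ) : cube d = univ.pi fun _ : Fin d => Ico (0 : ℝ) 1 := by
  ext x; simp [cube]

theorem volume_cube (d : ℕ) : volume (cube d) = 1 := by
  simp [cube_eq_pi, Real.volume_pi_Ico]

theorem measurableSet_cube (d : ℕ) : MeasurableSet (cube d) := by
  rw [cube_eq_pi]; exact .univ_pi fun _ => measurableSet_Ico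

theorem encard_vadd_mem_eq_of_existsUnique {G α : Type*} [AddCommGroup G] [AddAction G α]
    {S : Set α} {Φ : Set G} (hΦ : ∀ x, ∃! φ, φ ∈ Φ ∧ φ +ᵥ x ∈ S) (x y : α) :
    {g : G | g +ᵥ x ∈ S}.encard = {g : G | g +ᵥ y ∈ S}.encard := by
  choose φ hφ hφ_unique using hΦ
  -- `g ↦ φ (-g +ᵥ y) - g` trades `g` for the tile through `-g +ᵥ y`; the tile through
  -- `-(φ (-g +ᵥ y) - g) +ᵥ x` is the same one, so the map with `x` and `y` swapped undoes it.
  have hle (x y : α) : {g : G | g +ᵥ x ∈ S}.encard ≤ {g : G | g +ᵥ y ∈ S}.encard := by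
    have hmaps : MapsTo (fun g : G => φ (-g +ᵥ y) - g) {g | g +ᵥ x ∈ S} {g | g +ᵥ y ∈ S} :=
      fun g _ => by simpa [sub_eq_add_neg, add_vadd] using (hφ (-g +ᵥ y)).2
    have hinv : LeftInvOn (fun g : G => φ (-g +ᵥ x) - g) (fun g : G => φ (-g +ᵥ y) - g)
        {g | g +ᵥ x ∈ S} := by
      intro g hg
      have htile : φ (-(φ (-g +ᵥ y) - g) +ᵥ x) = φ (-g +ᵥ y) :=
        (hφ_unique _ _ ⟨(hφ _).1, by simpa [← add_vadd] using hg⟩).symm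
      simp only [htile, sub_sub_cancel]
    exact encard_le_encard_of_injOn hmaps hinv.injOn
  exact le_antisymm (hle x y) (hle y x)

theorem MeasureTheory.IsAddFundamentalDomain.measure_eq_encard_mul {G α : Type*} [AddGroup G]
    [AddAction G α] [MeasurableSpace α] [MeasurableConstVAdd G α] [Countable G] {μ : Measure α}
    [VAddInvariantMeasure G α μ] {F s : Set α} (hF : IsAddFundamentalDomain G F μ)
    (hs : MeasurableSet s) {n : ℕ∞} (hn : ∀ x, {g : G | g +ᵥ x ∈ s}.encard = n) :
    μ s = n * μ F := by
  have hcount (x : α) : ∑' g : G, s.indicator 1 (g +ᵥ x) = (n : ℝ≥0∞) := by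
    rw [← hn x, ← ENNReal.tsum_set_one, tsum_subtype {g : G | g +ᵥ x ∈ s} (fun _ => (1 : ℝ≥0∞))]
    rfl
  calc μ s = ∫⁻ x, s.indicator 1 x ∂μ := (lintegral_indicator_one hs).symm
    _ = ∑' g : G, ∫⁻ x in F, s.indicator 1 (g +ᵥ x) ∂μ := hF.lintegral_eq_tsum'' _
    _ = ∫⁻ x in F, ∑' g : G, s.indicator 1 (g +ᵥ x) ∂μ := by
      refine (lintegral_tsum fun g => ?_).symm
      exact ((measurable_one.indicator hs).comp (measurable_const_vadd g)).aemeasurable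
    _ = n * μ F := by simp [hcount]

theorem latticeOf_subset_span_col {d : ℕ} (A : Matrix (Fin d) (Fin d) ℝ) :
    latticeOf A ⊆ Submodule.span ℤ (range A.col) := by
  rintro _ ⟨k, rfl⟩
  rw [Matrix.mulVec_eq_sum]
  refine Submodule.sum_mem _ fun i _ => ?_
  rw [op_smul_eq_smul, Int.cast_smul_eq_zsmul]
  exact Submodule.smul_mem _ _ (Submodule.subset_span ⟨i, rfl⟩)

theorem IsTiling.existsUnique_vadd_mem {d : ℕ} {S Φ : Set (Fin d → ℝ)}
    {L : AddSubgroup (Fin d → ℝ)}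
    (hT : IsTiling S Φ) (hΦ : Φ ⊆ L) (x : Fin d → ℝ) :
    ∃! g : L, g ∈ {g : L | -(g : Fin d → ℝ) ∈ Φ} ∧ g +ᵥ x ∈ S := by
  obtain ⟨φ, ⟨hφ, hxφ⟩, huniq⟩ := hT x
  refine ⟨⟨-φ, neg_mem (hΦ hφ)⟩, ⟨by simpa using hφ, by simpa [sub_eq_neg_add] using hxφ⟩, ?_⟩
  intro g ⟨hgΦ, hgx⟩
  have hg : -(g : Fin d → ℝ) = φ :=
    huniq _ ⟨hgΦ, by simpa [sub_eq_neg_add, AddSubgroup.vadd_def] using hgx⟩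
  ext
  simp [← hg]

theorem exists_nat_eq_one_div_of_mul_ofReal_eq_one {n : ℕ∞} {r : ℝ}
    (h : (n : ℝ≥0∞) * ENNReal.ofReal r = 1) : ∃ N : ℕ, 1 ≤ N ∧ r = 1 / N := by
  have hr : 0 < r := ENNReal.ofReal_pos.1 (pos_iff_ne_zero.2 (right_ne_zero_of_mul_eq_one h))
  lift n to ℕ using by rintro rfl; simp [ENNReal.top_mul (ENNReal.ofReal_pos.2 hr).ne'] at h
  have hNr : (n : ℝ) * r = 1 := by
    simpa [ENNReal.toReal_ofReal hr.le] using congrArg ENNReal.toReal h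
  refine ⟨n, Nat.one_le_iff_ne_zero.2 ?_, eq_one_div_of_mul_eq_one_right hNr⟩
  rintro rfl
  simp at hNr

theorem stmt6_general (d : ℕ) (A : Matrix (Fin d) (Fin d) ℝ) (hA : A.det ≠ 0)
    (h : ∃ Φ : Set (Fin d → ℝ), Φ ⊆ latticeOf A ∧ IsTiling (cube d) Φ) :
    ∃ N : ℕ, 1 ≤ N ∧ |A.det| = 1 / (N : ℝ) := by
  obtain ⟨Φ, hΦA, hT⟩ := h
  let b := basisOfLinearIndependentOfCardEqFinrank' A.col
    (Matrix.linearIndependent_cols_of_det_ne_zero hA) (by simp)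
  let L := (Submodule.span ℤ (range b)).toAddSubgroup
  have hΦL : Φ ⊆ L := hΦA.trans (by simpa [L, b] using latticeOf_subset_span_col A)
  have : Countable L := inferInstanceAs (Countable (Submodule.span ℤ (range b)))
  have hcount := encard_vadd_mem_eq_of_existsUnique (hT.existsUnique_vadd_mem hΦL)
  have hvol := (ZSpan.isAddFundamentalDomain' b volume).measure_eq_encard_mul
    (measurableSet_cube d) (hcount · 0)
  rw [volume_cube, ZSpan.volume_fundamentalDomain, coe_basisOfLinearIndependentOfCardEqFinrank',
    show Matrix.of A.col = A.transpose from rfl, Matrix.det_transpose] at hvol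
  exact exists_nat_eq_one_div_of_mul_ofReal_eq_one hvol.symm

/-- Kolountzakis: if some `Φ ⊆ A ℤ^d` tiles with the unit cube, then `|det A| = 1/N` for some
natural number `N ≥ 1`. -/
theorem stmt6 (d : ℕ) (hd : 1 ≤ d) (A : Matrix (Fin d) (Fin d) ℝ) (hA : A.det ≠ 0)
    (h : ∃ Φ : Set (Fin d → ℝ), Φ ⊆ latticeOf A ∧ IsTiling (cube d) Φ) :
    ∃ N : ℕ, 1 ≤ N ∧ |A.det| = 1 / (N : ℝ) :=
  stmt6_general d A hA h

end
end

section
/- Let d ≥ 1 and let A, B ∈ ℝ^{d×d} be nonsingular. Then the following are equivalent: (ii) there exist a permutation matrix P ∈ {0,1}^{d×d} and a nonsingular integer matrix R ∈ ℤ^{d×d} such that P Bᵀ A R is unitriangular; (ii') there exist a nonsingular integer matrix R ∈ ℤ^{d×d} and a unitriangular matrix G ∈ ℝ^{d×d} such that B[0,1)^d = A^{−T} R^{−1} G [0,1)^d as subsets of ℝ^d. -/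
/-! Since a permutation matrix maps `[0,1)^d` onto itself, (ii) gives (ii') with `G = (P Bᵀ A R)ᵀ`
by matrix algebra. Conversely, if `B[0,1)^d = M[0,1)^d` with `M = A⁻ᵀ R⁻¹ G` invertible, then
`C = M⁻¹ B` maps the cube onto itself. As the cube spans `ℝ^d`, `C` is invertible, and both `C`
and `C⁻¹` map the cube into itself, so their entries lie in `[0,1]`. Two nonnegative matrices
with `C⁻¹ C = 1` are monomial, and the bound `≤ 1` on both forces the nonzero entries to be `1`:
`C` is a permutation matrix, `C Cᵀ = 1`, and `C Bᵀ A Rᵀ = Gᵀ`. -/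

open MeasureTheory Matrix
open scoped ENNReal

noncomputable section

open Equiv Set

lemma IsUnitriangular.transpose {d : ℕ} {G : Matrix (Fin d) (Fin d) ℝ}
    (h : IsUnitriangular G) : IsUnitriangular Gᵀ := by
  rcases h with ⟨hdiag, hzero⟩ | ⟨hdiag, hzero⟩
  · exact Or.inr ⟨hdiag, fun i j hij => hzero j i hij⟩
  · exact Or.inl ⟨hdiag, fun i j hij => hzero j i hij⟩

lemma IsUnitriangular.det_eq_one {d : ℕ} {G : Matrix (Fin d) (Fin d) ℝ}
    (h : IsUnitriangular G) : G.det = 1 := by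
  rcases h with ⟨hdiag, hzero⟩ | ⟨hdiag, hzero⟩
  · simp [det_of_isLowerTriangular G hzero, hdiag]
  · simp [det_of_isUpperTriangular hzero, hdiag]

lemma IsPermMatrix.exists_eq_permMatrix {d : ℕ} {P : Matrix (Fin d) (Fin d) ℝ}
    (hP : IsPermMatrix P) : ∃ σ : Perm (Fin d), P = σ.permMatrix ℝ := by
  obtain ⟨σ, hσ⟩ := hP
  refine ⟨σ⁻¹, Matrix.ext fun i j => ?_⟩
  rw [hσ]
  simp only [PEquiv.toMatrix_apply, toPEquiv_apply, Option.mem_def, Option.some.injEq,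
    Perm.inv_def, symm_apply_eq, @eq_comm _ i]

lemma IsPermMatrix.mul_transpose {d : ℕ} {P : Matrix (Fin d) (Fin d) ℝ}
    (hP : IsPermMatrix P) : P * Pᵀ = 1 := by
  obtain ⟨σ, rfl⟩ := hP.exists_eq_permMatrix
  simp [← permMatrix_mul]

lemma IsPermMatrix.transpose_mul {d : ℕ} {P : Matrix (Fin d) (Fin d) ℝ}
    (hP : IsPermMatrix P) : Pᵀ * P = 1 := by
  obtain ⟨σ, rfl⟩ := hP.exists_eq_permMatrix
  simp [← permMatrix_mul]

lemma IsPermMatrix.image_cube {d : ℕ} {P : Matrix (Fin d) (Fin d) ℝ}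
    (hP : IsPermMatrix P) : P.mulVec '' cube d = cube d := by
  obtain ⟨σ, rfl⟩ := hP.exists_eq_permMatrix
  ext y
  simp only [mem_image, permMatrix_mulVec]
  refine ⟨fun ⟨x, hx, hxy⟩ i => hxy ▸ hx (σ i), fun hy => ⟨y ∘ σ.symm, fun i => hy _, ?_⟩⟩
  ext i; simp

lemma span_cube (d : ℕ) : Submodule.span ℝ (cube d) = ⊤ := by
  refine eq_top_iff.mpr fun v _ => ?_
  rw [← Finset.univ_sum_single v]
  refine Submodule.sum_mem _ fun j _ => ?_
  have h : Pi.single j (1 / 2 : ℝ) ∈ cube d := fun i => by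
    by_cases hij : i = j <;> norm_num [hij]
  have hv : Pi.single j (v j) = (2 * v j) • Pi.single j (1 / 2 : ℝ) := by
    ext k
    by_cases hkj : k = j
    · simp [hkj]; ring
    · simp [hkj]
  rw [hv]
  exact Submodule.smul_mem _ _ (Submodule.subset_span h)

lemma isUnit_of_cube_subset_image {d : ℕ} {C : Matrix (Fin d) (Fin d) ℝ}
    (h : cube d ⊆ C.mulVec '' cube d) : IsUnit C := by
  have hrange : LinearMap.range C.mulVecLin = ⊤ := by
    rw [eq_top_iff, ← span_cube, Submodule.span_le]
    exact h.trans (by rintro _ ⟨x, -, rfl⟩; exact ⟨x, rfl⟩)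
  exact mulVec_surjective_iff_isUnit.mp (LinearMap.range_eq_top.mp hrange)

lemma entry_mem_Icc_of_mapsTo_cube {d : ℕ} {C : Matrix (Fin d) (Fin d) ℝ}
    (h : MapsTo C.mulVec (cube d) (cube d)) (i j : Fin d) : C i j ∈ Icc 0 1 := by
  have hcol : ∀ t : ℝ, 0 ≤ t → t < 1 → 0 ≤ C i j * t ∧ C i j * t < 1 := fun t ht0 ht1 => by
    have hx : Pi.single j t ∈ cube d := fun k => by
      by_cases hkj : k = j <;> simp [hkj, ht0, ht1]
    simpa [mulVec_single] using h hx i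
  refine ⟨by simpa using (hcol (1 / 2) (by norm_num) (by norm_num)).1, ?_⟩
  by_contra! hgt
  simpa [mul_inv_cancel₀ (by positivity : C i j ≠ 0)] using
    (hcol (C i j)⁻¹ (by positivity) (inv_lt_one_of_one_lt₀ hgt)).2

lemma Matrix.exists_perm_ne_zero_iff_of_nonneg_of_mul_eq_one {n : Type*} [Fintype n]
    [DecidableEq n] {C D : Matrix n n ℝ} (hC : ∀ i j, 0 ≤ C i j) (hD : ∀ i j, 0 ≤ D i j)
    (hDC : D * C = 1) : ∃ σ : Perm n, ∀ i j, C i j ≠ 0 ↔ σ j = i := by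
  have hoff : ∀ k j, k ≠ j → ∀ l, D k l * C l j = 0 := fun k j hkj l => by
    have hsum : ∑ l, D k l * C l j = 0 := by
      simpa [mul_apply, one_apply_ne hkj] using congr_fun (congr_fun hDC k) j
    exact (Finset.sum_eq_zero_iff_of_nonneg fun l _ => mul_nonneg (hD k l) (hC l j)).mp hsum l
      (Finset.mem_univ l)
  have hdiag : ∀ j, ∃ l, D j l * C l j ≠ 0 := fun j => by
    by_contra! h
    simpa [mul_apply, h] using congr_fun (congr_fun hDC j) j
  choose m hm using hdiag
  have hDcol : ∀ k j, D k (m j) ≠ 0 → k = j := fun k j hk => by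
    by_contra hkj
    exact mul_ne_zero hk (right_ne_zero_of_mul (hm j)) (hoff k j hkj (m j))
  have hinj : Function.Injective m := fun j j' h =>
    hDcol j j' (h ▸ left_ne_zero_of_mul (hm j))
  refine ⟨Equiv.ofBijective m hinj.bijective_of_finite, fun i j => ⟨fun hij => ?_, ?_⟩⟩
  · obtain ⟨j', rfl⟩ := hinj.bijective_of_finite.2 i
    by_contra hj'
    exact mul_ne_zero (left_ne_zero_of_mul (hm j')) hij (hoff j' j (fun h => hj' (h ▸ rfl)) _)
  · rintro rfl
    exact right_ne_zero_of_mul (hm j)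

lemma isPermMatrix_of_image_cube_eq {d : ℕ} {C : Matrix (Fin d) (Fin d) ℝ}
    (h : C.mulVec '' cube d = cube d) : IsPermMatrix C := by
  have hCu : IsUnit C.det := (isUnit_iff_isUnit_det C).mp (isUnit_of_cube_subset_image h.ge)
  have hDC : C⁻¹ * C = 1 := nonsing_inv_mul C hCu
  have hC : MapsTo C.mulVec (cube d) (cube d) := (mapsTo_image _ _).mono_right h.le
  have hD : MapsTo C⁻¹.mulVec (cube d) (cube d) := by
    rintro _ hy
    obtain ⟨x, hx, rfl⟩ := h.ge hy
    rwa [mulVec_mulVec, hDC, one_mulVec]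
  obtain ⟨σ, hσ⟩ := exists_perm_ne_zero_iff_of_nonneg_of_mul_eq_one
    (fun i j => (entry_mem_Icc_of_mapsTo_cube hC i j).1)
    (fun i j => (entry_mem_Icc_of_mapsTo_cube hD i j).1) hDC
  refine ⟨σ, fun i j => ?_⟩
  split_ifs with hij
  · subst hij
    have hprod : C⁻¹ j (σ j) * C (σ j) j = 1 := by
      have := congr_fun (congr_fun hDC j) j
      rwa [mul_apply, Finset.sum_eq_single (σ j) (fun l _ hl => by
        rw [not_ne_iff.mp (mt (hσ l j).mp (Ne.symm hl)), mul_zero]) (by simp), one_apply_eq] at this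
    have hD1 := (entry_mem_Icc_of_mapsTo_cube hD j (σ j)).2
    have hC0 := (entry_mem_Icc_of_mapsTo_cube hC (σ j) j).1
    have hC1 := (entry_mem_Icc_of_mapsTo_cube hC (σ j) j).2
    -- `1 = C⁻¹ j (σ j) * C (σ j) j ≤ C (σ j) j ≤ 1`
    nlinarith
  · exact not_ne_iff.mp (mt (hσ i j).mp hij)

lemma mulVec_image_mul {d : ℕ} (M N : Matrix (Fin d) (Fin d) ℝ) (s : Set (Fin d → ℝ)) :
    (M * N).mulVec '' s = M.mulVec '' (N.mulVec '' s) := by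
  simp only [image_image, mulVec_mulVec]

lemma isUnit_det_intCast {d : ℕ} {R : Matrix (Fin d) (Fin d) ℤ} (hR : R.det ≠ 0) :
    IsUnit (R.map (Int.cast : ℤ → ℝ)).det := by
  rw [← Int.cast_det]
  exact isUnit_iff_ne_zero.mpr (Int.cast_ne_zero.mpr hR)

lemma exists_image_cube_eq_of_isUnitriangular {d : ℕ} {A B P : Matrix (Fin d) (Fin d) ℝ}
    {R : Matrix (Fin d) (Fin d) ℤ} (hA : IsUnit A.det) (hP : IsPermMatrix P) (hR : R.det ≠ 0)
    (hU : IsUnitriangular (P * Bᵀ * A * R.map (Int.cast : ℤ → ℝ))) :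
    ∃ (R : Matrix (Fin d) (Fin d) ℤ) (G : Matrix (Fin d) (Fin d) ℝ),
      R.det ≠ 0 ∧ IsUnitriangular G ∧
      B.mulVec '' cube d = ((A⁻¹)ᵀ * (R.map (Int.cast : ℤ → ℝ))⁻¹ * G).mulVec '' cube d := by
  have hRu := isUnit_det_intCast hR
  refine ⟨Rᵀ, (P * Bᵀ * A * R.map Int.cast)ᵀ, by rwa [det_transpose], hU.transpose, ?_⟩
  have hB : (A⁻¹)ᵀ * (Rᵀ.map Int.cast)⁻¹ * (P * Bᵀ * A * R.map Int.cast)ᵀ * P = B := by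
    simp only [transpose_map, transpose_nonsing_inv, transpose_mul, transpose_transpose,
      Matrix.mul_assoc, hP.transpose_mul, Matrix.mul_one]
    rw [nonsing_inv_mul_cancel_left _ _ (isUnit_det_transpose _ hRu),
      nonsing_inv_mul_cancel_left _ _ (isUnit_det_transpose _ hA)]
  conv_lhs => rw [← hB]
  rw [mulVec_image_mul, hP.image_cube]

lemma exists_isUnitriangular_of_image_cube_eq {d : ℕ} {A B G : Matrix (Fin d) (Fin d) ℝ}
    {R : Matrix (Fin d) (Fin d) ℤ} (hA : IsUnit A.det) (hR : R.det ≠ 0) (hG : IsUnitriangular G)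
    (hB : B.mulVec '' cube d = ((A⁻¹)ᵀ * (R.map (Int.cast : ℤ → ℝ))⁻¹ * G).mulVec '' cube d) :
    ∃ (P : Matrix (Fin d) (Fin d) ℝ) (R : Matrix (Fin d) (Fin d) ℤ),
      IsPermMatrix P ∧ R.det ≠ 0 ∧ IsUnitriangular (P * Bᵀ * A * R.map (Int.cast : ℤ → ℝ)) := by
  have hRu := isUnit_det_intCast hR
  set M := (A⁻¹)ᵀ * (R.map (Int.cast : ℤ → ℝ))⁻¹ * G with hM
  have hMu : IsUnit M.det := by
    simp [hM, hA.ne_zero, hRu.ne_zero, hG.det_eq_one]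
  set C := M⁻¹ * B with hC
  have hCperm : IsPermMatrix C := by
    refine isPermMatrix_of_image_cube_eq ?_
    simp [hC, mulVec_image_mul, hB, image_image, mulVec_mulVec, nonsing_inv_mul M hMu]
  refine ⟨C, Rᵀ, hCperm, by rwa [det_transpose], ?_⟩
  suffices h : C * Bᵀ * A * Rᵀ.map Int.cast = Gᵀ from h ▸ hG.transpose
  have hBC : B = M * C := (mul_nonsing_inv_cancel_left _ B hMu).symm
  rw [hBC, hM]
  simp only [transpose_map, transpose_nonsing_inv, transpose_mul, transpose_transpose,
    Matrix.mul_assoc]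
  rw [nonsing_inv_mul_cancel_left _ _ hA, nonsing_inv_mul _ (isUnit_det_transpose _ hRu),
    ← Matrix.mul_assoc, hCperm.mul_transpose, Matrix.one_mul, Matrix.mul_one]

theorem stmt8_general (d : ℕ) (A B : Matrix (Fin d) (Fin d) ℝ)
    (hA : A.det ≠ 0) :
    (∃ (P : Matrix (Fin d) (Fin d) ℝ) (R : Matrix (Fin d) (Fin d) ℤ),
        IsPermMatrix P ∧ R.det ≠ 0 ∧
        IsUnitriangular (P * Bᵀ * A * R.map (Int.cast : ℤ → ℝ))) ↔
    (∃ (R : Matrix (Fin d) (Fin d) ℤ) (G : Matrix (Fin d) (Fin d) ℝ),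
        R.det ≠ 0 ∧ IsUnitriangular G ∧
        B.mulVec '' cube d =
          ((A⁻¹)ᵀ * (R.map (Int.cast : ℤ → ℝ))⁻¹ * G).mulVec '' cube d) :=
  ⟨fun ⟨_, _, hP, hR, hU⟩ => exists_image_cube_eq_of_isUnitriangular hA.isUnit hP hR hU,
    fun ⟨_, _, hR, hG, hB⟩ => exists_isUnitriangular_of_image_cube_eq hA.isUnit hR hG hB⟩

/-- `P Bᵀ A R` unitriangular for some permutation matrix `P` and nonsingular integer `R`
iff `B[0,1)^d = A⁻ᵀ R⁻¹ G [0,1)^d` for some nonsingular integer `R` and unitriangular `G`. -/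
theorem stmt8 (d : ℕ) (hd : 1 ≤ d) (A B : Matrix (Fin d) (Fin d) ℝ)
    (hA : A.det ≠ 0) (hB : B.det ≠ 0) :
    (∃ (P : Matrix (Fin d) (Fin d) ℝ) (R : Matrix (Fin d) (Fin d) ℤ),
        IsPermMatrix P ∧ R.det ≠ 0 ∧
        IsUnitriangular (P * Bᵀ * A * R.map (Int.cast : ℤ → ℝ))) ↔
    (∃ (R : Matrix (Fin d) (Fin d) ℤ) (G : Matrix (Fin d) (Fin d) ℝ),
        R.det ≠ 0 ∧ IsUnitriangular G ∧
        B.mulVec '' cube d =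
          ((A⁻¹)ᵀ * (R.map (Int.cast : ℤ → ℝ))⁻¹ * G).mulVec '' cube d) :=
  stmt8_general d A B hA

end
end

section
/- (Keller's theorem) Let d ≥ 1 and let Φ ⊆ ℝ^d be such that ([0,1)^d, Φ) is a tiling of ℝ^d. Then for every pair of distinct elements φ, φ' ∈ Φ, the difference φ − φ' has at least one coordinate that is a nonzero integer. -/
open MeasureTheory
open scoped ENNReal

noncomputable section

/-!
Cubes of the tiling that meet a line in direction `eᵢ` cut it into unit intervals, so their
`i`-th coordinates agree mod 1. Hence translating along `eᵢ` all cubes whose `i`-th coordinate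
lies in one class mod 1 yields another tiling. If `φ ≠ φ'` had no nonzero integer coordinate
difference, pick `i` with `φ i ≠ φ' i`, so that `φ i ≢ φ' i` mod 1, and shift the class of `φ i`
by `φ' i - φ i`. The translate of `φ` now differs from `φ'` in fewer coordinates, so by induction
it equals `φ'`: thus `φ` and `φ'` agree off `i`. But then both cubes meet the line
through `φ` in direction `eᵢ`, forcing `φ i ≡ φ' i` mod 1.
-/

lemma add_one_mem_of_existsUnique_cover {A : Set ℝ}
    (hA : ∀ x : ℝ, ∃! a, a ∈ A ∧ a ≤ x ∧ x < a + 1) {a : ℝ} (ha : a ∈ A) : a + 1 ∈ A := by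
  obtain ⟨c, ⟨hc, hca, hac⟩, -⟩ := hA (a + 1)
  rcases hca.eq_or_lt with rfl | hlt
  · exact hc
  · -- otherwise `c` is covered both by `[a, a + 1)` and by `[c, c + 1)`
    have := (hA c).unique ⟨ha, by linarith, by linarith⟩ ⟨hc, le_rfl, by linarith⟩
    linarith

lemma add_nat_mem_of_existsUnique_cover {A : Set ℝ}
    (hA : ∀ x : ℝ, ∃! a, a ∈ A ∧ a ≤ x ∧ x < a + 1) {a : ℝ} (ha : a ∈ A) (n : ℕ) :
    a + n ∈ A := by
  induction n with
  | zero => simpa using ha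
  | succ n ih => simpa [add_assoc] using add_one_mem_of_existsUnique_cover hA ih

theorem fract_eq_of_existsUnique_cover {A : Set ℝ}
    (hA : ∀ x : ℝ, ∃! a, a ∈ A ∧ a ≤ x ∧ x < a + 1) {a b : ℝ} (ha : a ∈ A) (hb : b ∈ A) :
    Int.fract a = Int.fract b := by
  wlog hab : a ≤ b generalizing a b
  · exact (this hb ha (le_of_not_ge hab)).symm
  have hn := add_nat_mem_of_existsUnique_cover hA ha ⌊b - a⌋₊
  have hle := Nat.floor_le (sub_nonneg.2 hab)
  have hlt := Nat.lt_floor_add_one (b - a)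
  have : a + ⌊b - a⌋₊ = b :=
    (hA b).unique ⟨hn, by linarith, by linarith⟩ ⟨hb, le_rfl, by linarith⟩
  rw [← this, Int.fract_add_natCast]

section CubeTiling

variable {d : ℕ}

lemma sub_mem_cube_iff {x χ : Fin d → ℝ} :
    x - χ ∈ cube d ↔ ∀ j, χ j ≤ x j ∧ x j < χ j + 1 := by
  simp only [cube, Set.mem_ofPred_eq, Pi.sub_apply, sub_nonneg, sub_lt_iff_lt_add']

/-- The cube `χ + [0,1)^d` meets the line through `y` in direction `eᵢ`. -/
def MeetsLine (i : Fin d) (y χ : Fin d → ℝ) : Prop :=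
  ∀ j, j ≠ i → χ j ≤ y j ∧ y j < χ j + 1

lemma meetsLine_congr {i : Fin d} {y y' χ : Fin d → ℝ} (hy : ∀ j, j ≠ i → y j = y' j) :
    MeetsLine i y χ ↔ MeetsLine i y' χ :=
  forall₂_congr fun j hj => by rw [hy j hj]

lemma sub_mem_cube_iff_meetsLine (i : Fin d) {x χ : Fin d → ℝ} :
    x - χ ∈ cube d ↔ MeetsLine i x χ ∧ χ i ≤ x i ∧ x i < χ i + 1 := by
  rw [sub_mem_cube_iff]
  refine ⟨fun hx => ⟨fun j _ => hx j, hx i⟩, fun ⟨hline, hi⟩ j => ?_⟩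
  by_cases hj : j = i
  · exact hj ▸ hi
  · exact hline j hj

theorem IsTiling.fract_eq_of_meetsLine {Φ : Set (Fin d → ℝ)} (h : IsTiling (cube d) Φ)
    {i : Fin d} {y φ ψ : Fin d → ℝ} (hφ : φ ∈ Φ) (hψ : ψ ∈ Φ) (hφy : MeetsLine i y φ)
    (hψy : MeetsLine i y ψ) : Int.fract (φ i) = Int.fract (ψ i) := by
  refine fract_eq_of_existsUnique_cover (A := (· i) '' {χ | χ ∈ Φ ∧ MeetsLine i y χ}) ?_
    ⟨φ, ⟨hφ, hφy⟩, rfl⟩ ⟨ψ, ⟨hψ, hψy⟩, rfl⟩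
  intro s
  have hcube : ∀ χ, Function.update y i s - χ ∈ cube d ↔
      MeetsLine i y χ ∧ χ i ≤ s ∧ s < χ i + 1 := fun χ => by
    rw [sub_mem_cube_iff_meetsLine i, meetsLine_congr fun j hj => Function.update_of_ne hj s y,
      Function.update_self]
  obtain ⟨χ, ⟨hχ, hχs⟩, huniq⟩ := h (Function.update y i s)
  rw [hcube] at hχs
  refine ⟨χ i, ⟨⟨χ, ⟨hχ, hχs.1⟩, rfl⟩, hχs.2⟩, ?_⟩
  rintro _ ⟨⟨χ', ⟨hχ', hχ'y⟩, rfl⟩, hs⟩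
  rw [huniq χ' ⟨hχ', (hcube χ').2 ⟨hχ'y, hs⟩⟩]

def shiftClass (Φ : Set (Fin d → ℝ)) (i : Fin d) (c t : ℝ) : Set (Fin d → ℝ) :=
  {χ | χ ∈ Φ ∧ Int.fract (χ i) ≠ c} ∪
    (· + Pi.single i t) '' {ψ | ψ ∈ Φ ∧ Int.fract (ψ i) = c}

theorem IsTiling.shiftClass {Φ : Set (Fin d → ℝ)} (h : IsTiling (cube d) Φ) (i : Fin d)
    (c t : ℝ) : IsTiling (cube d) (shiftClass Φ i c t) := by
  intro x
  obtain ⟨ψ, ⟨hψ, hψx⟩, huniq⟩ := h x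
  obtain ⟨ψ', ⟨hψ', hψ'x⟩, huniq'⟩ := h (x - Pi.single i t)
  have hshift : ∀ ρ, x - (ρ + Pi.single i t) = x - Pi.single i t - ρ :=
    fun ρ => sub_add_eq_sub_sub_swap _ _ _
  have hfract : Int.fract (ψ i) = Int.fract (ψ' i) := by
    refine h.fract_eq_of_meetsLine hψ hψ' ((sub_mem_cube_iff_meetsLine i).1 hψx).1 ?_
    refine (meetsLine_congr fun j hj => ?_).1 ((sub_mem_cube_iff_meetsLine i).1 hψ'x).1
    simp [Pi.single_eq_of_ne hj]
  by_cases hc : Int.fract (ψ i) = c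
  · refine ⟨ψ' + Pi.single i t, ⟨Or.inr ⟨ψ', ⟨hψ', hfract ▸ hc⟩, rfl⟩, by rwa [hshift]⟩, ?_⟩
    rintro χ ⟨⟨hχ, hχc⟩ | ⟨ρ, ⟨hρ, -⟩, rfl⟩, hχx⟩
    · exact absurd (huniq χ ⟨hχ, hχx⟩ ▸ hc) hχc
    · rw [huniq' ρ ⟨hρ, by rwa [← hshift]⟩]
  · refine ⟨ψ, ⟨Or.inl ⟨hψ, hc⟩, hψx⟩, ?_⟩
    rintro χ ⟨⟨hχ, -⟩ | ⟨ρ, ⟨hρ, hρc⟩, rfl⟩, hχx⟩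
    · exact huniq χ ⟨hχ, hχx⟩
    · obtain rfl := huniq' ρ ⟨hρ, by rwa [← hshift]⟩
      exact absurd (hfract.trans hρc) hc

theorem IsTiling.eq_of_forall_notMem_eq (s : Finset (Fin d)) :
    ∀ {Φ : Set (Fin d → ℝ)} {φ φ' : Fin d → ℝ}, IsTiling (cube d) Φ → φ ∈ Φ → φ' ∈ Φ →
      (∀ i, Int.fract (φ i) = Int.fract (φ' i) → φ i = φ' i) → (∀ j ∉ s, φ j = φ' j) →
      φ = φ' := by
  classical
  induction s using Finset.induction_on with
  | empty => exact fun _ _ _ _ hoff => funext fun j => hoff j (Finset.notMem_empty j)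
  | insert i s _ ih =>
    intro Φ φ φ' h hφ hφ' hfract hoff
    by_cases hφi : φ i = φ' i
    · refine ih h hφ hφ' hfract fun j hj => ?_
      by_cases hji : j = i
      · exact hji ▸ hφi
      · exact hoff j (by simp [hji, hj])
    have hne : Int.fract (φ' i) ≠ Int.fract (φ i) := fun he => hφi (hfract i he.symm)
    set t := φ' i - φ i
    set φ'' : Fin d → ℝ := φ + Pi.single i t
    have hφ''i : φ'' i = φ' i := by simp [φ'', t]
    have hφ''j : ∀ j, j ≠ i → φ'' j = φ j := fun j hj => by simp [φ'', hj]
    have heq : φ'' = φ' := by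
      refine ih (h.shiftClass i (Int.fract (φ i)) t) (Or.inr ⟨φ, ⟨hφ, rfl⟩, rfl⟩)
        (Or.inl ⟨hφ', hne⟩) (fun j => ?_) (fun j hj => ?_)
      · by_cases hji : j = i
        · exact fun _ => hji ▸ hφ''i
        · rw [hφ''j j hji]; exact hfract j
      · by_cases hji : j = i
        · exact hji ▸ hφ''i
        · rw [hφ''j j hji]; exact hoff j (by simp [hji, hj])
    have hline : MeetsLine i φ φ' := fun j hj => by
      rw [← heq, hφ''j j hj]
      constructor <;> linarith
    exact absurd (h.fract_eq_of_meetsLine hφ' hφ hline fun j _ => ⟨le_rfl, by linarith⟩) hne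

end CubeTiling

theorem stmt10_general (d : ℕ) (Φ : Set (Fin d → ℝ)) (h : IsTiling (cube d) Φ) :
    ∀ φ ∈ Φ, ∀ φ' ∈ Φ, φ ≠ φ' →
      ∃ i : Fin d, ∃ n : ℤ, n ≠ 0 ∧ φ i - φ' i = (n : ℝ) := by
  intro φ hφ φ' hφ' hne
  by_contra! hcon
  refine hne (h.eq_of_forall_notMem_eq Finset.univ hφ hφ' (fun i hi => ?_) (by simp))
  obtain ⟨n, hn⟩ := Int.fract_eq_fract.1 hi
  obtain rfl : n = 0 := by_contra fun hn0 => hcon i n hn0 hn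
  simpa [sub_eq_zero] using hn

/-- Keller's theorem: in a cube tiling, the difference of any two distinct translation vectors
has a nonzero integer coordinate. -/
theorem stmt10 (d : ℕ) (hd : 1 ≤ d) (Φ : Set (Fin d → ℝ)) (h : IsTiling (cube d) Φ) :
    ∀ φ ∈ Φ, ∀ φ' ∈ Φ, φ ≠ φ' →
      ∃ i : Fin d, ∃ n : ℤ, n ≠ 0 ∧ φ i - φ' i = (n : ℝ) :=
  stmt10_general d Φ h

end
end
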